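/- (Corollary 1) Let b > 1 and κ > 0. Suppose for each n ∈ ℕ we have p(n) ∈ ℕ, a continuously differentiable cost Cₙ : (Fin p(n) → ℝ) → ℝ satisfying the parameter shift rule in coordinate j(n) (for all θ, ∂_{j(n)}Cₙ(θ) = (1/2)(Cₙ(θ + (π/2)e_{j(n)}) − Cₙ(θ − (π/2)e_{j(n)}))), a probability measure μₙ invariant under θ ↦ θ ± (π/2)e_{j(n)}, and a coordinate i(n) such that ∂_{i(n)}Cₙ is square-integrable with ∫ ∂_{i(n)}Cₙ dμₙ = 0 and variance Vₙ ≤ κ·b^{−n} (a barren plateau). Then for every c > 0 and every n, μₙ{ θ : |∂_{i(n)}∂_{j(n)}Cₙ(θ)| ≥ c } ≤ 2κ·b^{−n} / c², i.e., the Hessian matrix elements are exponentially suppressed in n with high probability. -/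

import Mathlib

/-!
Because the parameter shift rule expresses `∂ⱼC` through translates of `C`, and translations
commute with `∂ᵢ`, the Hessian element `∂ᵢ∂ⱼC(θ)` is half the difference of `∂ᵢC` at
`θ ± (π/2)eⱼ`. If it is at least `c` in absolute value, so is `∂ᵢC` at one of the two shifted
points; by invariance of `μ` under both shifts this costs a factor `2` over the event
`|∂ᵢC| ≥ c`, which Chebyshev's inequality bounds by `∫ (∂ᵢC)² dμ / c²`.
-/

open MeasureTheory

/-- Partial derivative of `C` with respect to the `i`-th coordinate. -/
noncomputable def pderiv' {p : ℕ} (i : Fin p) (C : (Fin p → ℝ) → ℝ) : (Fin p → ℝ) → ℝ :=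
  fun θ => deriv (fun t => C (Function.update θ i t)) (θ i)

section PartialDerivative

variable {p : ℕ} (i : Fin p)

lemma update_add_const (θ s : Fin p → ℝ) (t : ℝ) :
    Function.update θ i t + s = Function.update (θ + s) i (t + s i) := by
  rw [Function.update_add, Function.update_eq_self]

lemma pderiv'_comp_add_const (C : (Fin p → ℝ) → ℝ) (s θ : Fin p → ℝ) :
    pderiv' i (fun x => C (x + s)) θ = pderiv' i C (θ + s) := by
  simp only [pderiv', update_add_const, Pi.add_apply]
  exact deriv_comp_add_const (f := fun t => C (Function.update (θ + s) i t)) (s i) (θ i)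

lemma pderiv'_comp_sub_const (C : (Fin p → ℝ) → ℝ) (s θ : Fin p → ℝ) :
    pderiv' i (fun x => C (x - s)) θ = pderiv' i C (θ - s) := by
  simpa only [sub_eq_add_neg] using pderiv'_comp_add_const i C (-s) θ

theorem pderiv'_pderiv'_eq_of_shift_rule {C : (Fin p → ℝ) → ℝ} (hC : Differentiable ℝ C)
    (j : Fin p) (s : Fin p → ℝ)
    (hshift : ∀ θ, pderiv' j C θ = (1 / 2) * (C (θ + s) - C (θ - s))) (θ : Fin p → ℝ) :
    pderiv' i (pderiv' j C) θ = (1 / 2) * (pderiv' i C (θ + s) - pderiv' i C (θ - s)) := by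
  rw [← pderiv'_comp_add_const, ← pderiv'_comp_sub_const, funext hshift]
  have hupd : ∀ u : Fin p → ℝ, Differentiable ℝ (fun t => C (Function.update θ i t + u)) :=
    fun u t => (hC _).comp t ((hasDerivAt_update θ i t).differentiableAt.add_const u)
  simp only [pderiv', sub_eq_add_neg _ s]
  exact (((hupd s _).hasDerivAt.sub (hupd (-s) _).hasDerivAt).const_mul _).deriv

end PartialDerivative

section Measure

variable {α : Type*} [MeasurableSpace α] {μ : Measure α}

theorem measure_le_abs_le_ofReal_integral_sq_div {f : α → ℝ} (hf : MemLp f 2 μ) {c : ℝ}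
    (hc : 0 < c) : μ {x | c ≤ |f x|} ≤ ENNReal.ofReal ((∫ x, f x ^ 2 ∂μ) / c ^ 2) := by
  have hset : {x | c ≤ |f x|} = {x | ENNReal.ofReal (c ^ 2) ≤ ENNReal.ofReal (f x ^ 2)} := by
    ext x
    rw [Set.mem_ofPred_eq, Set.mem_ofPred_eq, ENNReal.ofReal_le_ofReal_iff (sq_nonneg _),
      ← sq_abs (f x), sq_le_sq₀ hc.le (abs_nonneg _)]
  have hmarkov := mul_meas_ge_le_lintegral₀
    (hf.aestronglyMeasurable.aemeasurable.pow_const 2).ennreal_ofReal (ENNReal.ofReal (c ^ 2))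
  rw [← ofReal_integral_eq_lintegral_ofReal hf.integrable_sq
    (ae_of_all _ fun x => sq_nonneg _), ← hset] at hmarkov
  rw [ENNReal.ofReal_div_of_pos (by positivity)]
  refine (ENNReal.le_div_iff_mul_le (.inl (by positivity)) (.inl ENNReal.ofReal_ne_top)).mpr ?_
  rwa [mul_comm]

theorem measure_le_abs_half_sub_comp_le_two_mul {f : α → ℝ} (hf : AEMeasurable f μ)
    {T₁ T₂ : α → α} (h₁ : MeasurePreserving T₁ μ μ) (h₂ : MeasurePreserving T₂ μ μ) (c : ℝ) :
    μ {x | c ≤ |(1 / 2) * (f (T₁ x) - f (T₂ x))|} ≤ 2 * μ {x | c ≤ |f x|} := by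
  set A := {x | c ≤ |f x|}
  have hA : NullMeasurableSet A μ := nullMeasurableSet_le aemeasurable_const hf.abs
  have hsub : {x | c ≤ |(1 / 2) * (f (T₁ x) - f (T₂ x))|} ⊆ T₁ ⁻¹' A ∪ T₂ ⁻¹' A := by
    intro x hx
    by_contra h
    simp only [Set.mem_union, Set.mem_preimage, A, Set.mem_ofPred_eq, not_or, not_le] at hx h
    have := abs_sub (f (T₁ x)) (f (T₂ x))
    rw [abs_mul, abs_of_pos (by norm_num : (0 : ℝ) < 1 / 2)] at hx
    linarith
  calc μ {x | c ≤ |(1 / 2) * (f (T₁ x) - f (T₂ x))|}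
      ≤ μ (T₁ ⁻¹' A) + μ (T₂ ⁻¹' A) := (measure_mono hsub).trans (measure_union_le _ _)
    _ = 2 * μ A := by rw [h₁.measure_preimage hA, h₂.measure_preimage hA, two_mul]

end Measure

theorem cor1_hessian_barren_plateau_general
    (b κ : ℝ)
    (p : ℕ → ℕ) (C : ∀ n, (Fin (p n) → ℝ) → ℝ)
    (hC1 : ∀ n, ContDiff ℝ 1 (C n))
    (j : ∀ n, Fin (p n))
    (hshift : ∀ n, ∀ θ : Fin (p n) → ℝ, pderiv' (j n) (C n) θ =
      (1 / 2) * ((C n) (θ + Pi.single (j n) (Real.pi / 2))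
        - (C n) (θ - Pi.single (j n) (Real.pi / 2))))
    (μ : ∀ n, Measure (Fin (p n) → ℝ))
    (hμ_plus : ∀ n, MeasurePreserving (fun θ => θ + Pi.single (j n) (Real.pi / 2)) (μ n) (μ n))
    (hμ_minus : ∀ n, MeasurePreserving (fun θ => θ - Pi.single (j n) (Real.pi / 2)) (μ n) (μ n))
    (i : ∀ n, Fin (p n))
    (hL2 : ∀ n, MemLp (pderiv' (i n) (C n)) 2 (μ n))
    (V : ℕ → ℝ) (hV : ∀ n, V n = ∫ θ, (pderiv' (i n) (C n) θ) ^ 2 ∂(μ n))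
    (hBP : ∀ n, V n ≤ κ * b⁻¹ ^ n)
    (c : ℝ) (hc : 0 < c) (n : ℕ) :
    μ n {θ | c ≤ |pderiv' (i n) (pderiv' (j n) (C n)) θ|} ≤
      ENNReal.ofReal (2 * κ * b⁻¹ ^ n / c ^ 2) := by
  simp_rw [pderiv'_pderiv'_eq_of_shift_rule (i n) ((hC1 n).differentiable one_ne_zero) (j n) _
    (hshift n)]
  calc _ ≤ 2 * μ n {θ | c ≤ |pderiv' (i n) (C n) θ|} :=
        measure_le_abs_half_sub_comp_le_two_mul (hL2 n).aestronglyMeasurable.aemeasurable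
          (hμ_plus n) (hμ_minus n) c
    _ ≤ 2 * ENNReal.ofReal (V n / c ^ 2) := by
        rw [hV n]
        gcongr
        exact measure_le_abs_le_ofReal_integral_sq_div (hL2 n) hc
    _ ≤ ENNReal.ofReal (2 * κ * b⁻¹ ^ n / c ^ 2) := by
        rw [← ENNReal.ofReal_ofNat 2, ← ENNReal.ofReal_mul zero_le_two, mul_div_assoc', mul_assoc]
        gcongr
        exact hBP n

/-- Corollary 1: in a barren plateau, where the variance of `∂ᵢCₙ` is bounded by `κ·b⁻ⁿ`,
the Hessian matrix elements are exponentially suppressed in `n` with high probability: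
`μₙ{θ : |∂ᵢ∂ⱼCₙ(θ)| ≥ c} ≤ 2κ·b⁻ⁿ/c²`. -/
theorem cor1_hessian_barren_plateau
    (b κ : ℝ) (hb : 1 < b) (hκ : 0 < κ)
    (p : ℕ → ℕ) (C : ∀ n, (Fin (p n) → ℝ) → ℝ)
    (hC1 : ∀ n, ContDiff ℝ 1 (C n))
    (j : ∀ n, Fin (p n))
    (hshift : ∀ n, ∀ θ : Fin (p n) → ℝ, pderiv' (j n) (C n) θ =
      (1 / 2) * ((C n) (θ + Pi.single (j n) (Real.pi / 2))
        - (C n) (θ - Pi.single (j n) (Real.pi / 2))))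
    (μ : ∀ n, Measure (Fin (p n) → ℝ)) (hprob : ∀ n, IsProbabilityMeasure (μ n))
    (hμ_plus : ∀ n, MeasurePreserving (fun θ => θ + Pi.single (j n) (Real.pi / 2)) (μ n) (μ n))
    (hμ_minus : ∀ n, MeasurePreserving (fun θ => θ - Pi.single (j n) (Real.pi / 2)) (μ n) (μ n))
    (i : ∀ n, Fin (p n))
    (hL2 : ∀ n, MemLp (pderiv' (i n) (C n)) 2 (μ n))
    (hmean : ∀ n, ∫ θ, pderiv' (i n) (C n) θ ∂(μ n) = 0)
    (V : ℕ → ℝ) (hV : ∀ n, V n = ∫ θ, (pderiv' (i n) (C n) θ) ^ 2 ∂(μ n))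
    (hBP : ∀ n, V n ≤ κ * b⁻¹ ^ n)
    (c : ℝ) (hc : 0 < c) (n : ℕ) :
    μ n {θ | c ≤ |pderiv' (i n) (pderiv' (j n) (C n)) θ|} ≤
      ENNReal.ofReal (2 * κ * b⁻¹ ^ n / c ^ 2) :=
  cor1_hessian_barren_plateau_general b κ p C hC1 j hshift μ hμ_plus hμ_minus i hL2 V hV hBP c hc n
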